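/- For every arbitrary strategy μ of Min in the closed region graph T̄, every ε > 0, every type-preserving boundary strategy χ of Max, every strategy χ_ε that is ε-close to χ, every configuration q, and every n ∈ ℕ, the total time of the first n transitions of the run from q under (μ,χ_ε) is at least that of the run from q under (μ[q,χ_ε],χ) minus n·ε, where μ[q,χ_ε] is any type-preserving boundary strategy of Min such that the run from q under (μ[q,χ_ε],χ) has the same type as the run from q under (μ,χ_ε). Symmetrically, for every arbitrary strategy χ of Max in T̄, every ε > 0, every type-preserving boundary strategy μ of Min, every strategy μ_ε that is ε-close to μ, every configuration q and every n ∈ ℕ, the total time of the first n transitions of the run from q under (μ_ε,χ) is at most that of the run from q under (μ_ε-induced type-matching strategy pair (μ,χ[q,μ_ε])) plus n·ε, where χ[q,μ_ε] is any type-preserving boundary strategy of Max such that the run from q under (μ,χ[q,μ_ε]) has the same type as the run from q under (μ_ε,χ). -/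

import Mathlib

noncomputable section

attribute [local instance] Classical.propDecidable

/-- A two-player (Min/Max) game arena with real-valued step costs. -/
structure Arena (Conf Move : Type) where
  Tr : Conf → Move → Conf → Prop
  cost : Conf → Move → ℝ
  IsMin : Conf → Prop

namespace Arena

variable {Conf Move : Type}

/-- A finite run in the arena. -/
structure FinRun (G : Arena Conf Move) where
  n : ℕ
  q : Fin (n + 1) → Conf
  m : Fin n → Move
  valid : ∀ i : Fin n, G.Tr (q i.castSucc) (m i) (q i.succ)

/-- The last configuration of a finite run. -/
def FinRun.last {G : Arena Conf Move} (r : G.FinRun) : Conf := r.q (Fin.last r.n)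

/-- The first configuration of a finite run. -/
def FinRun.first {G : Arena Conf Move} (r : G.FinRun) : Conf := r.q 0

/-- The trivial run consisting of a single configuration. -/
def single (G : Arena Conf Move) (q0 : Conf) : G.FinRun :=
  ⟨0, fun _ => q0, Fin.elim0, fun i => i.elim0⟩

/-- Extending a finite run by one transition. -/
def FinRun.extend {G : Arena Conf Move} (r : G.FinRun) (mv : Move) (q' : Conf)
    (h : G.Tr r.last mv q') : G.FinRun where
  n := r.n + 1
  q := Fin.snoc r.q q'
  m := Fin.snoc r.m mv
  valid := by
    intro i
    induction i using Fin.lastCases with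
    | last =>
        simpa only [FinRun.last, Fin.snoc_castSucc, Fin.succ_last, Fin.snoc_last] using h
    | cast j =>
        simp only [Fin.snoc_castSucc]
        rw [Fin.succ_castSucc, Fin.snoc_castSucc]
        exact r.valid j

/-- Strategies of player Min: mappings from finite runs to moves that are
available whenever the last configuration belongs to Min. -/
def MinStrategy (G : Arena Conf Move) : Type :=
  {σ : G.FinRun → Move // ∀ r : G.FinRun, G.IsMin r.last → ∃ q', G.Tr r.last (σ r) q'}

/-- Strategies of player Max. -/
def MaxStrategy (G : Arena Conf Move) : Type :=
  {σ : G.FinRun → Move // ∀ r : G.FinRun, ¬ G.IsMin r.last → ∃ q', G.Tr r.last (σ r) q'}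

/-- A strategy is positional if its choice depends only on the last configuration. -/
def Positional {G : Arena Conf Move} (σ : G.FinRun → Move) : Prop :=
  ∀ r r' : G.FinRun, r.last = r'.last → σ r = σ r'

/-- The finite prefixes of the unique play from `q0` in which Min uses `μ`
and Max uses `χ`. -/
def play (G : Arena Conf Move) (μ : G.MinStrategy) (χ : G.MaxStrategy) (q0 : Conf) :
    ℕ → G.FinRun
  | 0 => G.single q0
  | n + 1 =>
    let r := G.play μ χ q0 n
    if h : G.IsMin r.last then
      r.extend (μ.1 r) (Classical.choose (μ.2 r h)) (Classical.choose_spec (μ.2 r h))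
    else
      r.extend (χ.1 r) (Classical.choose (χ.2 r h)) (Classical.choose_spec (χ.2 r h))

/-- Total cost (e.g. total time) of a finite run. -/
def FinRun.time {G : Arena Conf Move} (r : G.FinRun) : ℝ :=
  ∑ i : Fin r.n, G.cost (r.q i.castSucc) (r.m i)

/-- Payoff of player Min (to be minimised): limsup of average cost. -/
def AMin (G : Arena Conf Move) (q0 : Conf) (μ : G.MinStrategy) (χ : G.MaxStrategy) : ℝ :=
  Filter.limsup (fun n : ℕ => (G.play μ χ q0 n).time / n) Filter.atTop

/-- Payoff of player Max (to be maximised): liminf of average cost. -/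
def AMax (G : Arena Conf Move) (q0 : Conf) (μ : G.MinStrategy) (χ : G.MaxStrategy) : ℝ :=
  Filter.liminf (fun n : ℕ => (G.play μ χ q0 n).time / n) Filter.atTop

/-- Upper value of the game at `q0`. -/
def upperVal (G : Arena Conf Move) (q0 : Conf) : ℝ :=
  ⨅ μ : G.MinStrategy, ⨆ χ : G.MaxStrategy, G.AMin q0 μ χ

/-- Lower value of the game at `q0`. -/
def lowerVal (G : Arena Conf Move) (q0 : Conf) : ℝ :=
  ⨆ χ : G.MaxStrategy, ⨅ μ : G.MinStrategy, G.AMax q0 μ χ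

/-- The value of the game at `q0` (meaningful when the game is determined). -/
def val (G : Arena Conf Move) (q0 : Conf) : ℝ := G.upperVal q0

end Arena
/-- `k`-bounded clock valuations. -/
def IsVal (k : ℕ) {C : Type} (ν : C → ℝ) : Prop := ∀ c, 0 ≤ ν c ∧ ν c ≤ (k : ℝ)

/-- Two clock valuations satisfy exactly the same simple clock constraints
`c ⋈ i` and `c − c' ⋈ i` with `i ∈ {0,…,k}` and `⋈ ∈ {<,=,>}` (hence also ≤, ≥). -/
def RegEq (k : ℕ) {C : Type} (ν ν' : C → ℝ) : Prop :=
  ∀ i : ℕ, i ≤ k → ∀ c c' : C,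
    ((ν c < (i : ℝ) ↔ ν' c < (i : ℝ)) ∧ (ν c = (i : ℝ) ↔ ν' c = (i : ℝ)) ∧
      ((i : ℝ) < ν c ↔ (i : ℝ) < ν' c)) ∧
    ((ν c - ν c' < (i : ℝ) ↔ ν' c - ν' c' < (i : ℝ)) ∧
      (ν c - ν c' = (i : ℝ) ↔ ν' c - ν' c' = (i : ℝ)) ∧
      ((i : ℝ) < ν c - ν c' ↔ (i : ℝ) < ν' c - ν' c'))

/-- An average-time game on a (bounded) timed automaton: a timed automaton
together with a partition of locations between players Min and Max. -/
structure TimedGame where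
  L : Type
  C : Type
  A : Type
  finL : Finite L
  finC : Finite C
  finA : Finite A
  k : ℕ
  S : Set (L × (C → ℝ))
  En : A → Set (L × (C → ℝ))
  δ : L → A → L
  ϱ : A → Set C
  LMin : Set L
  bounded : ∀ s ∈ S, IsVal k s.2
  S_zone : (∀ (ℓ : L) (ν ν' : C → ℝ), RegEq k ν ν' → ((ℓ, ν) ∈ S ↔ (ℓ, ν') ∈ S)) ∧
    ∀ ℓ : L, Convex ℝ {ν : C → ℝ | (ℓ, ν) ∈ S}
  En_sub : ∀ a, En a ⊆ S
  En_zone : ∀ a : A,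
    (∀ (ℓ : L) (ν ν' : C → ℝ), RegEq k ν ν' → ((ℓ, ν) ∈ En a ↔ (ℓ, ν') ∈ En a)) ∧
    ∀ ℓ : L, Convex ℝ {ν : C → ℝ | (ℓ, ν) ∈ En a}
  nonstuck : ∀ s ∈ S, ∃ (t : ℝ) (a : A), 0 ≤ t ∧
    (∀ t', 0 ≤ t' → t' ≤ t → (s.1, fun c => s.2 c + t') ∈ S) ∧
    ((s.1, fun c => s.2 c + t) ∈ En a) ∧
    ((δ s.1 a, fun c => if c ∈ ϱ a then 0 else s.2 c + t) ∈ S)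

namespace TimedGame

/-- Configurations of the timed automaton. -/
abbrev Q (T : TimedGame) : Type := T.L × (T.C → ℝ)

/-- Resetting the clocks in `X` to zero. -/
def resetv (T : TimedGame) (ν : T.C → ℝ) (X : Set T.C) : T.C → ℝ :=
  fun c => if c ∈ X then 0 else ν c

/-- The successor configuration after the timed action `τ = (t, a)`. -/
def tsucc (T : TimedGame) (s : T.Q) (τ : ℝ × T.A) : T.Q :=
  (T.δ s.1 τ.2, T.resetv (fun c => s.2 c + τ.1) (T.ϱ τ.2))

/-- The transition relation `s →_τ s'` of the timed automaton. -/
def Trans (T : TimedGame) (s : T.Q) (τ : ℝ × T.A) (s' : T.Q) : Prop :=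
  0 ≤ τ.1 ∧ (∀ t', 0 ≤ t' → t' ≤ τ.1 → (s.1, fun c => s.2 c + t') ∈ T.S) ∧
  ((s.1, fun c => s.2 c + τ.1) ∈ T.En τ.2) ∧ s' = T.tsucc s τ ∧ s' ∈ T.S

/-- The game arena of the average-time game played on the timed automaton. -/
def taArena (T : TimedGame) : Arena {s : T.Q // s ∈ T.S} (ℝ × T.A) where
  Tr := fun s τ s' => T.Trans s.1 τ s'.1
  cost := fun _ τ => τ.1
  IsMin := fun s => s.1.1 ∈ T.LMin

/-- A clock region: an equivalence class of the region equivalence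
(restricted to `k`-bounded valuations). -/
def IsClockRegion (T : TimedGame) (P : Set (T.C → ℝ)) : Prop :=
  ∃ ν : T.C → ℝ, P = {ν' | IsVal T.k ν' ∧ RegEq T.k ν ν'}

/-- Regions: pairs of a location and a clock region. -/
def Region (T : TimedGame) : Type :=
  T.L × {P : Set (T.C → ℝ) // T.IsClockRegion P}

/-- The clock region of a valuation. -/
def clockRegionOf (T : TimedGame) (ν : T.C → ℝ) : {P : Set (T.C → ℝ) // T.IsClockRegion P} :=
  ⟨{ν' | IsVal T.k ν' ∧ RegEq T.k ν ν'}, ⟨ν, rfl⟩⟩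

/-- The region `[s]` of a configuration `s`. -/
def regionOf (T : TimedGame) (s : T.Q) : T.Region := (s.1, T.clockRegionOf s.2)

/-- The configurations `Ω` of the region graphs: pairs of a configuration
of the timed automaton and a region. -/
abbrev Omega (T : TimedGame) : Type := T.Q × T.Region

/-- `(s, (ℓ, P))` is a state of the closed region graph: the locations match
and `s`'s valuation lies in the closure of the clock region `P`. -/
def barS (T : TimedGame) (q : T.Omega) : Prop :=
  q.1.1 = q.2.1 ∧ q.1.2 ∈ closure q.2.2.1

/-- `(s, (ℓ, P))` is a state of the region graph: the locations match and
`s`'s valuation lies in the clock region `P`. -/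
def tildeS (T : TimedGame) (q : T.Omega) : Prop :=
  q.1.1 = q.2.1 ∧ q.1.2 ∈ q.2.2.1

/-- `R →_* R'` : the region `R'` is a time successor of `R`. -/
def timeSucc (T : TimedGame) (R R' : T.Region) : Prop :=
  R.1 = R'.1 ∧ ∀ ν ∈ R.2.1, ∃ t : ℝ, 0 ≤ t ∧
    (∀ t', 0 ≤ t' → t' ≤ t → (R.1, fun c => ν c + t') ∈ T.S) ∧
    (fun c => ν c + t) ∈ R'.2.1

/-- The discrete transition `s →^a s'` of the timed automaton. -/
def astep (T : TimedGame) (s : T.Q) (a : T.A) (s' : T.Q) : Prop :=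
  s ∈ T.S ∧ s' ∈ T.S ∧ s ∈ T.En a ∧ s' = (T.δ s.1 a, T.resetv s.2 (T.ϱ a))

/-- `R →^a R'` at the level of regions. -/
def regAct (T : TimedGame) (R : T.Region) (a : T.A) (R' : T.Region) : Prop :=
  ∃ ν ∈ R.2.1, ∃ ν' ∈ R'.2.1, T.astep (R.1, ν) a (R'.1, ν')

/-- Moves of the region graphs: a delay, an intermediate region, and an action. -/
abbrev RMove (T : TimedGame) : Type := ℝ × T.Region × T.A

/-- Transitions underlying pre-runs: `(s', R') = succ((s,R), (t,R'',a))` with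
`R →_* R'' →^a R'`. -/
def preTrans (T : TimedGame) (q : T.Omega) (m : T.RMove) (q' : T.Omega) : Prop :=
  0 ≤ m.1 ∧ T.timeSucc q.2 m.2.1 ∧ T.regAct m.2.1 m.2.2 q'.2 ∧
  q'.1 = T.tsucc q.1 (m.1, m.2.2)

/-- Labelled transitions of the closed region graph `T̄`. -/
def cTrans (T : TimedGame) (q : T.Omega) (m : T.RMove) (q' : T.Omega) : Prop :=
  T.preTrans q m q' ∧ T.barS q ∧ T.barS q' ∧
  (fun c => q.1.2 c + m.1) ∈ closure m.2.1.2.1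

/-- Labelled transitions of the boundary region graph `T̂`: additionally the
intermediate valuation lies on the boundary of the intermediate region. -/
def bTrans (T : TimedGame) (q : T.Omega) (m : T.RMove) (q' : T.Omega) : Prop :=
  T.cTrans q m q' ∧ (fun c => q.1.2 c + m.1) ∈ frontier m.2.1.2.1

/-- Labelled transitions of the region graph `T̃`. -/
def rTrans (T : TimedGame) (q : T.Omega) (m : T.RMove) (q' : T.Omega) : Prop :=
  T.preTrans q m q' ∧ T.tildeS q ∧ T.tildeS q' ∧
  (fun c => q.1.2 c + m.1) ∈ m.2.1.2.1

/-- The arena of pre-runs over `Ω`. -/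
def preArena (T : TimedGame) : Arena T.Omega T.RMove where
  Tr := T.preTrans
  cost := fun _ m => m.1
  IsMin := fun q => q.2.1 ∈ T.LMin

/-- Finite pre-runs. -/
abbrev PreRunF (T : TimedGame) : Type := (T.preArena).FinRun

/-- Pre-strategies of Min. -/
abbrev MinPre (T : TimedGame) : Type := (T.preArena).MinStrategy

/-- Pre-strategies of Max. -/
abbrev MaxPre (T : TimedGame) : Type := (T.preArena).MaxStrategy

/-- A pre-strategy of Min is a strategy in the closed region graph `T̄`
if it always waits into the closure of the chosen intermediate region. -/
def MinClosed (T : TimedGame) (μ : T.MinPre) : Prop :=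
  ∀ r : T.PreRunF,
    (fun c => (Arena.FinRun.last r).1.2 c + (μ.1 r).1) ∈ closure (μ.1 r).2.1.2.1

def MaxClosed (T : TimedGame) (χ : T.MaxPre) : Prop :=
  ∀ r : T.PreRunF,
    (fun c => (Arena.FinRun.last r).1.2 c + (χ.1 r).1) ∈ closure (χ.1 r).2.1.2.1

/-- Admissible strategies: strategies in the region graph `T̃`. -/
def MinAdmissible (T : TimedGame) (μ : T.MinPre) : Prop :=
  ∀ r : T.PreRunF,
    (fun c => (Arena.FinRun.last r).1.2 c + (μ.1 r).1) ∈ (μ.1 r).2.1.2.1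

def MaxAdmissible (T : TimedGame) (χ : T.MaxPre) : Prop :=
  ∀ r : T.PreRunF,
    (fun c => (Arena.FinRun.last r).1.2 c + (χ.1 r).1) ∈ (χ.1 r).2.1.2.1

/-- Boundary strategies of Min: the delay is the **infimum** of the delays
reaching the closure of the chosen intermediate region. -/
def MinBoundary (T : TimedGame) (μ : T.MinPre) : Prop :=
  ∀ r : T.PreRunF,
    (μ.1 r).1 = sInf {t : ℝ | 0 ≤ t ∧
      (fun c => (Arena.FinRun.last r).1.2 c + t) ∈ closure (μ.1 r).2.1.2.1}

/-- Boundary strategies of Max: the delay is the **supremum** of the delays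
reaching the closure of the chosen intermediate region. -/
def MaxBoundary (T : TimedGame) (χ : T.MaxPre) : Prop :=
  ∀ r : T.PreRunF,
    (χ.1 r).1 = sSup {t : ℝ | 0 ≤ t ∧
      (fun c => (Arena.FinRun.last r).1.2 c + t) ∈ closure (χ.1 r).2.1.2.1}

/-- The sequence of regions visited by a finite pre-run (its type, part 1). -/
def typeConfs (T : TimedGame) (r : T.PreRunF) : ℕ → Option T.Region :=
  fun i => if h : i < r.n + 1 then some ((r.q ⟨i, h⟩).2) else none

/-- The sequence of intermediate regions and actions of a finite pre-run
(its type, part 2). -/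
def typeMoves (T : TimedGame) (r : T.PreRunF) : ℕ → Option (T.Region × T.A) :=
  fun i => if h : i < r.n then some ((r.m ⟨i, h⟩).2) else none

/-- Two finite pre-runs have the same type. -/
def sameType (T : TimedGame) (r r' : T.PreRunF) : Prop :=
  T.typeConfs r = T.typeConfs r' ∧ T.typeMoves r = T.typeMoves r'

/-- The waiting time `t(s, α)` of the boundary timed action `α = (b, c, a)`. -/
def tOf (T : TimedGame) (s : T.Q) (α : ℕ × T.C × T.A) : ℝ :=
  if s.2 α.2.1 ≤ (α.1 : ℝ) then (α.1 : ℝ) - s.2 α.2.1 else 0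

/-- Type-preserving boundary strategies of Min: runs of the same type are
assigned the same intermediate region, action and boundary timed action. -/
def MinTP (T : TimedGame) (μ : T.MinPre) : Prop :=
  T.MinBoundary μ ∧
  ∀ r r' : T.PreRunF, T.sameType r r' →
    (μ.1 r).2 = (μ.1 r').2 ∧
    ∃ (b : ℕ) (c : T.C), b ≤ T.k ∧
      (μ.1 r).1 = T.tOf (Arena.FinRun.last r).1 (b, c, (μ.1 r).2.2) ∧
      (μ.1 r').1 = T.tOf (Arena.FinRun.last r').1 (b, c, (μ.1 r').2.2)

def MaxTP (T : TimedGame) (χ : T.MaxPre) : Prop :=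
  T.MaxBoundary χ ∧
  ∀ r r' : T.PreRunF, T.sameType r r' →
    (χ.1 r).2 = (χ.1 r').2 ∧
    ∃ (b : ℕ) (c : T.C), b ≤ T.k ∧
      (χ.1 r).1 = T.tOf (Arena.FinRun.last r).1 (b, c, (χ.1 r).2.2) ∧
      (χ.1 r').1 = T.tOf (Arena.FinRun.last r').1 (b, c, (χ.1 r').2.2)

/-- `μ_ε` is `ε`-close to the type-preserving boundary strategy `μ` of Min. -/
def EpsCloseMin (T : TimedGame) (μ με : T.MinPre) (ε : ℝ) : Prop :=
  ∀ r : T.PreRunF, (με.1 r).2 = (μ.1 r).2 ∧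
    (fun c => (Arena.FinRun.last r).1.2 c + (με.1 r).1) ∈ (μ.1 r).2.1.2.1 ∧
    (με.1 r).1 ≤ (μ.1 r).1 + ε

/-- `χ_ε` is `ε`-close to the type-preserving boundary strategy `χ` of Max. -/
def EpsCloseMax (T : TimedGame) (χ χε : T.MaxPre) (ε : ℝ) : Prop :=
  ∀ r : T.PreRunF, (χε.1 r).2 = (χ.1 r).2 ∧
    (fun c => (Arena.FinRun.last r).1.2 c + (χε.1 r).1) ∈ (χ.1 r).2.1.2.1 ∧
    (χ.1 r).1 - ε ≤ (χε.1 r).1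

/-- Upper value of the game on the subgraph of region graphs whose strategies
are the pre-strategies satisfying `PMin`, `PMax` respectively. -/
def upperG (T : TimedGame) (PMin : T.MinPre → Prop) (PMax : T.MaxPre → Prop)
    (q : T.Omega) : ℝ :=
  ⨅ μ : {μ : T.MinPre // PMin μ}, ⨆ χ : {χ : T.MaxPre // PMax χ},
    Arena.AMin T.preArena q μ.1 χ.1

/-- Lower value. -/
def lowerG (T : TimedGame) (PMin : T.MinPre → Prop) (PMax : T.MaxPre → Prop)
    (q : T.Omega) : ℝ :=
  ⨆ χ : {χ : T.MaxPre // PMax χ}, ⨅ μ : {μ : T.MinPre // PMin μ},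
    Arena.AMax T.preArena q μ.1 χ.1

def upperBar (T : TimedGame) : T.Omega → ℝ := T.upperG T.MinClosed T.MaxClosed
def lowerBar (T : TimedGame) : T.Omega → ℝ := T.lowerG T.MinClosed T.MaxClosed
/-- The value of the average-time game on the closed region graph `T̄`. -/
def valBar (T : TimedGame) : T.Omega → ℝ := T.upperBar

def upperHat (T : TimedGame) : T.Omega → ℝ := T.upperG T.MinBoundary T.MaxBoundary
def lowerHat (T : TimedGame) : T.Omega → ℝ := T.lowerG T.MinBoundary T.MaxBoundary
/-- The value of the average-time game on the boundary region graph `T̂`. -/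
def valHat (T : TimedGame) : T.Omega → ℝ := T.upperHat

def upperTilde (T : TimedGame) : T.Omega → ℝ := T.upperG T.MinAdmissible T.MaxAdmissible
def lowerTilde (T : TimedGame) : T.Omega → ℝ := T.lowerG T.MinAdmissible T.MaxAdmissible
/-- The value of the average-time game on the region graph `T̃`. -/
def valTilde (T : TimedGame) : T.Omega → ℝ := T.upperTilde

/-- A function is simple on a set `X` of configurations. -/
def SimpleOn (T : TimedGame) (X : Set T.Omega) (F : T.Omega → ℝ) : Prop :=
  (∃ e : ℤ, ∀ q ∈ X, F q = (e : ℝ)) ∨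
  (∃ (e : ℤ) (c : T.C), ∀ q ∈ X, F q = (e : ℝ) - q.1.2 c)

/-- A function on the configurations of the closed region graph is regionally
simple. -/
def RegionallySimple (T : TimedGame) (F : T.Omega → ℝ) : Prop :=
  ∀ R : T.Region, T.SimpleOn {q : T.Omega | T.barS q ∧ q.2 = R} F

/-- A function on the configurations of the closed region graph is regionally
constant. -/
def RegionallyConstant (T : TimedGame) (F : T.Omega → ℝ) : Prop :=
  ∀ R : T.Region, ∃ v : ℝ, ∀ q : T.Omega, T.barS q → q.2 = R → F q = v

/-- The configuration `(s, [s])` of the region graphs determined by a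
configuration `s` of the timed automaton. -/
def confOf (T : TimedGame) (s : T.Q) : T.Omega := (s, T.regionOf s)

/-- A region is thin if some clock has an integer value throughout its closure. -/
def Thin (T : TimedGame) (R : T.Region) : Prop :=
  ∃ c : T.C, ∀ ν ∈ closure R.2.1, ∃ m : ℤ, ν c = (m : ℝ)

/-- `R'` is the immediate time successor of `R`. -/
def ImmTimeSucc (T : TimedGame) (R R' : T.Region) : Prop :=
  R.1 = R'.1 ∧ ∀ ν ∈ R.2.1, ∃ ε : ℝ, 0 < ε ∧
    ∀ t : ℝ, 0 < t → t < ε → (fun c => ν c + t) ∈ R'.2.1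

end TimedGame

/-! Two plays of the same type visit the same regions, choose the same intermediate regions and
actions, and therefore reset the same clocks. At each step, the delay of the play whose time is
bounded above exceeds the delay of the other play by at most `ε + max (ν' c - ν c) 0`, where `c`
is the clock of the shared boundary timed action `(b, c, a)`: the boundary delays `b - ν c` and
`b - ν' c` differ by the clock gap, a boundary delay is the infimum (Min) or supremum (Max) of the
closed delays into the same region, and an `ε`-close delay is within `ε` of the boundary one.
Since `ν c - ν' c` is exactly the drift accumulated since `c` was last reset, these local bounds
add up to a drift of at most `n * ε`. -/

namespace Arena

variable {Conf Move : Type} {G : Arena Conf Move}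

theorem FinRun.last_extend (r : G.FinRun) (mv : Move) (q' : Conf) (h : G.Tr r.last mv q') :
    (r.extend mv q' h).last = q' := by
  simp [FinRun.extend, FinRun.last]

theorem FinRun.m_extend_last (r : G.FinRun) (mv : Move) (q' : Conf) (h : G.Tr r.last mv q') :
    (r.extend mv q' h).m (Fin.last r.n) = mv :=
  Fin.snoc_last (α := fun _ => Move) _ _

theorem FinRun.time_extend (r : G.FinRun) (mv : Move) (q' : Conf) (h : G.Tr r.last mv q') :
    (r.extend mv q' h).time = r.time + G.cost r.last mv := by
  show ∑ i : Fin (r.n + 1), G.cost (Fin.snoc (α := fun _ => Conf) r.q q' i.castSucc)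
      (Fin.snoc (α := fun _ => Move) r.m mv i) = _
  simp [Fin.sum_univ_castSucc, FinRun.time, FinRun.last]

def playMove (G : Arena Conf Move) (μ : G.MinStrategy) (χ : G.MaxStrategy) (q0 : Conf)
    (n : ℕ) : Move :=
  if G.IsMin (G.play μ χ q0 n).last then μ.1 (G.play μ χ q0 n) else χ.1 (G.play μ χ q0 n)

theorem playMove_of_isMin {μ : G.MinStrategy} {χ : G.MaxStrategy} {q0 : Conf} {n : ℕ}
    (h : G.IsMin (G.play μ χ q0 n).last) : G.playMove μ χ q0 n = μ.1 (G.play μ χ q0 n) :=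
  if_pos h

theorem playMove_of_not_isMin {μ : G.MinStrategy} {χ : G.MaxStrategy} {q0 : Conf} {n : ℕ}
    (h : ¬ G.IsMin (G.play μ χ q0 n).last) : G.playMove μ χ q0 n = χ.1 (G.play μ χ q0 n) :=
  if_neg h

variable (μ : G.MinStrategy) (χ : G.MaxStrategy) (q0 : Conf)

theorem exists_play_succ_eq_extend (n : ℕ) :
    ∃ (q' : Conf) (h : G.Tr (G.play μ χ q0 n).last (G.playMove μ χ q0 n) q'),
      G.play μ χ q0 (n + 1) = (G.play μ χ q0 n).extend _ q' h := by
  by_cases hmin : G.IsMin (G.play μ χ q0 n).last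
  · simp only [playMove, if_pos hmin, play, dif_pos hmin]
    exact ⟨_, Classical.choose_spec _, rfl⟩
  · simp only [playMove, if_neg hmin, play, dif_neg hmin]
    exact ⟨_, Classical.choose_spec _, rfl⟩

theorem play_length (n : ℕ) : (G.play μ χ q0 n).n = n := by
  induction n with
  | zero => rfl
  | succ n ih =>
    obtain ⟨q', h, hplay⟩ := exists_play_succ_eq_extend μ χ q0 n
    rw [hplay]
    exact congrArg (· + 1) ih

theorem play_tr (n : ℕ) :
    G.Tr (G.play μ χ q0 n).last (G.playMove μ χ q0 n) (G.play μ χ q0 (n + 1)).last := by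
  obtain ⟨q', h, hplay⟩ := exists_play_succ_eq_extend μ χ q0 n
  rwa [hplay, FinRun.last_extend]

theorem time_play (n : ℕ) :
    (G.play μ χ q0 n).time =
      ∑ i ∈ Finset.range n, G.cost (G.play μ χ q0 i).last (G.playMove μ χ q0 i) := by
  induction n with
  | zero => exact Fin.sum_univ_zero _
  | succ n ih =>
    obtain ⟨q', h, hplay⟩ := exists_play_succ_eq_extend μ χ q0 n
    rw [hplay, FinRun.time_extend, ih, Finset.sum_range_succ]

end Arena

theorem sum_sub_le_of_step_le_clock_gap {C : Type*} {ε : ℝ} {tA tB : ℕ → ℝ}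
    {νA νB : ℕ → C → ℝ} {X : ℕ → Set C} (hε : 0 ≤ ε) (h0 : νA 0 = νB 0)
    (hA : ∀ n c, νA (n + 1) c = if c ∈ X n then 0 else νA n c + tA n)
    (hB : ∀ n c, νB (n + 1) c = if c ∈ X n then 0 else νB n c + tB n)
    (hstep : ∀ n, ∃ c, tA n - tB n ≤ max (νB n c - νA n c) 0 + ε) (n : ℕ) :
    ∑ i ∈ Finset.range n, (tA i - tB i) ≤ n * ε := by
  -- `νA n c - νB n c` is the drift accumulated since the last reset of `c`, so the second
  -- conjunct bounds the drift accumulated before that reset.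
  suffices h : ∀ n, ∑ i ∈ Finset.range n, (tA i - tB i) ≤ n * ε ∧
      ∀ c, ∑ i ∈ Finset.range n, (tA i - tB i) - (νA n c - νB n c) ≤ n * ε from (h n).1
  intro n
  induction n with
  | zero => simp [h0]
  | succ n ih =>
    obtain ⟨hD, hC⟩ := ih
    obtain ⟨c, hc⟩ := hstep n
    have hgap : max (νB n c - νA n c) 0 ≤ n * ε - ∑ i ∈ Finset.range n, (tA i - tB i) :=
      max_le (by linarith [hC c]) (by linarith)
    have hD' : ∑ i ∈ Finset.range (n + 1), (tA i - tB i) ≤ (n + 1 : ℕ) * ε := by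
      rw [Finset.sum_range_succ, Nat.cast_succ]
      linarith
    refine ⟨hD', fun c' => ?_⟩
    rw [hA, hB]
    split_ifs
    · linarith
    · rw [Finset.sum_range_succ, Nat.cast_succ]
      linarith [hC c']

theorem isClosed_setOf_isVal (k : ℕ) (C : Type) : IsClosed {ν : C → ℝ | IsVal k ν} := by
  simp only [IsVal, Set.ofPred_forall, Set.ofPred_and]
  exact isClosed_iInter fun c => (isClosed_le continuous_const (continuous_apply c)).inter
    (isClosed_le (continuous_apply c) continuous_const)

namespace TimedGame

variable {T : TimedGame}

theorem isVal_of_mem_closure_clockRegion (P : {P : Set (T.C → ℝ) // T.IsClockRegion P})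
    {ν : T.C → ℝ} (h : ν ∈ closure P.1) : IsVal T.k ν := by
  obtain ⟨ν₀, hP⟩ := P.2
  refine closure_minimal (fun ν' hν' => ?_) (isClosed_setOf_isVal T.k T.C) h
  rw [hP] at hν'
  exact hν'.1

theorem tOf_le_tOf_add (s s' : T.Q) (b : ℕ) (c : T.C) (a a' : T.A) :
    T.tOf s (b, c, a) ≤ T.tOf s' (b, c, a') + max (s'.2 c - s.2 c) 0 := by
  simp only [tOf]
  split_ifs <;> linarith [le_max_left (s'.2 c - s.2 c) 0, le_max_right (s'.2 c - s.2 c) 0]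

theorem MinBoundary.delay_le {μ : T.MinPre} (hμ : T.MinBoundary μ) (r : T.PreRunF) {t : ℝ}
    (ht : 0 ≤ t) (hcl : (fun c => r.last.1.2 c + t) ∈ closure (μ.1 r).2.1.2.1) :
    (μ.1 r).1 ≤ t := by
  rw [hμ r]
  exact csInf_le ⟨0, fun _ h => h.1⟩ ⟨ht, hcl⟩

theorem MaxBoundary.le_delay [Nonempty T.C] {χ : T.MaxPre} (hχ : T.MaxBoundary χ)
    (r : T.PreRunF) {t : ℝ} (ht : 0 ≤ t)
    (hcl : (fun c => r.last.1.2 c + t) ∈ closure (χ.1 r).2.1.2.1) :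
    t ≤ (χ.1 r).1 := by
  obtain ⟨c⟩ := ‹Nonempty T.C›
  rw [hχ r]
  refine le_csSup ⟨T.k - r.last.1.2 c, fun t' ht' => ?_⟩ ⟨ht, hcl⟩
  linarith [(isVal_of_mem_closure_clockRegion _ ht'.2 c).2]

theorem sameType.symm {r r' : T.PreRunF} (h : T.sameType r r') : T.sameType r' r :=
  ⟨h.1.symm, h.2.symm⟩

theorem sameType.last_region_eq {r r' : T.PreRunF} (h : T.sameType r r') (hn : r.n = r'.n) :
    r.last.2 = r'.last.2 := by
  obtain ⟨n, q, m, v⟩ := r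
  obtain ⟨n', q', m', v'⟩ := r'
  obtain rfl : n = n' := hn
  simpa [typeConfs, Arena.FinRun.last, Fin.last] using congrFun h.1 n

theorem typeMoves_extend (r : T.PreRunF) (mv : T.RMove) (q' : T.Omega)
    (h : T.preArena.Tr r.last mv q') :
    T.typeMoves (r.extend mv q' h) r.n = some mv.2 := by
  rw [typeMoves, dif_pos (show r.n < (r.extend mv q' h).n from Nat.lt_succ_self r.n)]
  exact congrArg (fun m : T.RMove => some m.2) (r.m_extend_last mv q' h)

theorem preTrans_val {q q' : T.Omega} {m : T.RMove} (h : T.preTrans q m q') (c : T.C) :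
    q'.1.2 c = if c ∈ T.ϱ m.2.2 then 0 else q.1.2 c + m.1 := by
  rw [h.2.2.2]
  rfl

theorem MinTP.delay_le_of_minClosed {μ' μ : T.MinPre} (hμ' : T.MinTP μ') (hμ : T.MinClosed μ)
    {rA rB : T.PreRunF} (hAB : T.sameType rA rB) (hreg : (μ'.1 rA).2 = (μ.1 rB).2)
    (hnonneg : 0 ≤ (μ.1 rB).1) :
    ∃ c, (μ'.1 rA).1 ≤ (μ.1 rB).1 + max (rB.last.1.2 c - rA.last.1.2 c) 0 := by
  obtain ⟨hsnd, b, c, -, hA, hB⟩ := hμ'.2 rA rB hAB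
  have hinf : (μ'.1 rB).1 ≤ (μ.1 rB).1 :=
    hμ'.1.delay_le rB hnonneg (by rw [← hsnd, hreg]; exact hμ rB)
  have htOf := tOf_le_tOf_add rA.last.1 rB.last.1 b c (μ'.1 rA).2.2 (μ'.1 rB).2.2
  rw [← hA, ← hB] at htOf
  exact ⟨c, by linarith⟩

theorem MaxTP.delay_le_of_maxClosed {χ' χ : T.MaxPre} (hχ' : T.MaxTP χ') (hχ : T.MaxClosed χ)
    {rA rB : T.PreRunF} (hAB : T.sameType rA rB) (hreg : (χ'.1 rB).2 = (χ.1 rA).2)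
    (hnonneg : 0 ≤ (χ.1 rA).1) :
    ∃ c, (χ.1 rA).1 ≤ (χ'.1 rB).1 + max (rB.last.1.2 c - rA.last.1.2 c) 0 := by
  obtain ⟨hsnd, b, c, -, hA, hB⟩ := hχ'.2 rA rB hAB
  have : Nonempty T.C := ⟨c⟩
  have hsup : (χ.1 rA).1 ≤ (χ'.1 rA).1 :=
    hχ'.1.le_delay rA hnonneg (by rw [hsnd, hreg]; exact hχ rA)
  have htOf := tOf_le_tOf_add rA.last.1 rB.last.1 b c (χ'.1 rA).2.2 (χ'.1 rB).2.2
  rw [← hA, ← hB] at htOf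
  exact ⟨c, by linarith⟩

theorem MaxTP.delay_le_of_epsCloseMax {χ χε : T.MaxPre} {ε : ℝ} (hχ : T.MaxTP χ)
    (hχε : T.EpsCloseMax χ χε ε) {rA rB : T.PreRunF} (hAB : T.sameType rA rB) :
    ∃ c, (χ.1 rA).1 ≤ (χε.1 rB).1 + max (rB.last.1.2 c - rA.last.1.2 c) 0 + ε := by
  obtain ⟨-, b, c, -, hA, hB⟩ := hχ.2 rA rB hAB
  have htOf := tOf_le_tOf_add rA.last.1 rB.last.1 b c (χ.1 rA).2.2 (χ.1 rB).2.2
  rw [← hA, ← hB] at htOf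
  exact ⟨c, by linarith [(hχε rB).2.2]⟩

theorem MinTP.delay_le_of_epsCloseMin {μ με : T.MinPre} {ε : ℝ} (hμ : T.MinTP μ)
    (hμε : T.EpsCloseMin μ με ε) {rA rB : T.PreRunF} (hAB : T.sameType rA rB) :
    ∃ c, (με.1 rA).1 ≤ (μ.1 rB).1 + max (rB.last.1.2 c - rA.last.1.2 c) 0 + ε := by
  obtain ⟨-, b, c, -, hA, hB⟩ := hμ.2 rA rB hAB
  have htOf := tOf_le_tOf_add rA.last.1 rB.last.1 b c (μ.1 rA).2.2 (μ.1 rB).2.2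
  rw [← hA, ← hB] at htOf
  exact ⟨c, by linarith [(hμε rA).2.2]⟩

section Plays

variable {μA μB : T.MinPre} {χA χB : T.MaxPre} {q : T.Omega}

theorem time_play (μ : T.MinPre) (χ : T.MaxPre) (q : T.Omega) (n : ℕ) :
    (T.preArena.play μ χ q n).time = ∑ i ∈ Finset.range n, (T.preArena.playMove μ χ q i).1 :=
  Arena.time_play μ χ q n

theorem play_last_region_eq_of_sameType {n : ℕ}
    (h : T.sameType (T.preArena.play μA χA q n) (T.preArena.play μB χB q n)) :
    (T.preArena.play μA χA q n).last.2 = (T.preArena.play μB χB q n).last.2 :=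
  h.last_region_eq (by rw [Arena.play_length, Arena.play_length])

theorem typeMoves_play_succ (μ : T.MinPre) (χ : T.MaxPre) (q : T.Omega) (n : ℕ) :
    T.typeMoves (T.preArena.play μ χ q (n + 1)) n = some (T.preArena.playMove μ χ q n).2 := by
  obtain ⟨q', h, hplay⟩ := Arena.exists_play_succ_eq_extend μ χ q n
  have := typeMoves_extend _ _ q' h
  rwa [Arena.play_length, ← hplay] at this

theorem playMove_snd_eq_of_sameType {n : ℕ}
    (h : T.sameType (T.preArena.play μA χA q (n + 1)) (T.preArena.play μB χB q (n + 1))) :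
    (T.preArena.playMove μA χA q n).2 = (T.preArena.playMove μB χB q n).2 := by
  simpa [typeMoves_play_succ] using congrFun h.2 n

theorem time_play_le_of_step_le {ε : ℝ} (hε : 0 ≤ ε)
    (hst : ∀ n, T.sameType (T.preArena.play μA χA q n) (T.preArena.play μB χB q n))
    (hstep : ∀ n, ∃ c, (T.preArena.playMove μA χA q n).1 ≤
      (T.preArena.playMove μB χB q n).1 +
        max ((T.preArena.play μB χB q n).last.1.2 c - (T.preArena.play μA χA q n).last.1.2 c) 0 + ε)
    (n : ℕ) :
    (T.preArena.play μA χA q n).time ≤ (T.preArena.play μB χB q n).time + n * ε := by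
  have hdrift := sum_sub_le_of_step_le_clock_gap
    (X := fun i => T.ϱ (T.preArena.playMove μA χA q i).2.2)
    (νA := fun i => (T.preArena.play μA χA q i).last.1.2)
    (νB := fun i => (T.preArena.play μB χB q i).last.1.2) hε rfl
    (fun i => preTrans_val (Arena.play_tr μA χA q i))
    (fun i c => by
      rw [preTrans_val (Arena.play_tr μB χB q i), playMove_snd_eq_of_sameType (hst (i + 1))])
    (fun i => (hstep i).imp fun _ h => by linarith) n
  rw [Finset.sum_sub_distrib] at hdrift
  rw [time_play, time_play]
  linarith

theorem isMin_play_iff_of_sameType {n : ℕ}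
    (h : T.sameType (T.preArena.play μA χA q n) (T.preArena.play μB χB q n)) :
    T.preArena.IsMin (T.preArena.play μA χA q n).last ↔
      T.preArena.IsMin (T.preArena.play μB χB q n).last := by
  change _ ∈ T.LMin ↔ _ ∈ T.LMin
  rw [play_last_region_eq_of_sameType h]

theorem playMove_nonneg (μ : T.MinPre) (χ : T.MaxPre) (q : T.Omega) (n : ℕ) :
    0 ≤ (T.preArena.playMove μ χ q n).1 :=
  (Arena.play_tr μ χ q n).1

theorem playMove_le_of_minClosed_of_epsCloseMax {ε : ℝ} (hε : 0 ≤ ε) (hμA : T.MinTP μA)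
    (hχA : T.MaxTP χA) (hμB : T.MinClosed μB) (hχB : T.EpsCloseMax χA χB ε)
    (hst : ∀ n, T.sameType (T.preArena.play μA χA q n) (T.preArena.play μB χB q n)) (n : ℕ) :
    ∃ c, (T.preArena.playMove μA χA q n).1 ≤
      (T.preArena.playMove μB χB q n).1 +
        max ((T.preArena.play μB χB q n).last.1.2 c - (T.preArena.play μA χA q n).last.1.2 c) 0 +
          ε := by
  have hsnd := playMove_snd_eq_of_sameType (hst (n + 1))
  have hnonneg := playMove_nonneg μB χB q n
  by_cases hmin : T.preArena.IsMin (T.preArena.play μA χA q n).last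
  · have hminB := (isMin_play_iff_of_sameType (hst n)).1 hmin
    rw [Arena.playMove_of_isMin hmin, Arena.playMove_of_isMin hminB] at hsnd ⊢
    rw [Arena.playMove_of_isMin hminB] at hnonneg
    obtain ⟨c, hc⟩ := hμA.delay_le_of_minClosed hμB (hst n) hsnd hnonneg
    exact ⟨c, by linarith⟩
  · have hminB := (not_congr (isMin_play_iff_of_sameType (hst n))).1 hmin
    rw [Arena.playMove_of_not_isMin hmin, Arena.playMove_of_not_isMin hminB]
    exact hχA.delay_le_of_epsCloseMax hχB (hst n)

theorem playMove_le_of_epsCloseMin_of_maxClosed {ε : ℝ} (hε : 0 ≤ ε) (hμB : T.MinTP μB)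
    (hχB : T.MaxTP χB) (hμA : T.EpsCloseMin μB μA ε) (hχA : T.MaxClosed χA)
    (hst : ∀ n, T.sameType (T.preArena.play μA χA q n) (T.preArena.play μB χB q n)) (n : ℕ) :
    ∃ c, (T.preArena.playMove μA χA q n).1 ≤
      (T.preArena.playMove μB χB q n).1 +
        max ((T.preArena.play μB χB q n).last.1.2 c - (T.preArena.play μA χA q n).last.1.2 c) 0 +
          ε := by
  have hsnd := playMove_snd_eq_of_sameType (hst (n + 1))
  have hnonneg := playMove_nonneg μA χA q n
  by_cases hmin : T.preArena.IsMin (T.preArena.play μA χA q n).last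
  · have hminB := (isMin_play_iff_of_sameType (hst n)).1 hmin
    rw [Arena.playMove_of_isMin hmin, Arena.playMove_of_isMin hminB]
    exact hμB.delay_le_of_epsCloseMin hμA (hst n)
  · have hminB := (not_congr (isMin_play_iff_of_sameType (hst n))).1 hmin
    rw [Arena.playMove_of_not_isMin hmin, Arena.playMove_of_not_isMin hminB] at hsnd ⊢
    rw [Arena.playMove_of_not_isMin hmin] at hnonneg
    obtain ⟨c, hc⟩ := hχB.delay_le_of_maxClosed hχA (hst n) hsnd.symm hnonneg
    exact ⟨c, by linarith⟩

end Plays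

end TimedGame

/-- Against an `ε`-close perturbation of a type-preserving boundary strategy of
the opponent, the total time of the first `n` transitions differs from the
type-matching type-preserving answer against the unperturbed strategy by at
most `n·ε`. -/
theorem nstep_boundary_better_against_epsilon (T : TimedGame) :
    (∀ μ : T.MinPre, T.MinClosed μ → ∀ ε : ℝ, 0 < ε →
      ∀ χ : T.MaxPre, T.MaxTP χ → ∀ χε : T.MaxPre, T.EpsCloseMax χ χε ε →
      ∀ q : T.Omega, T.barS q → ∀ μ' : T.MinPre, T.MinTP μ' →
      (∀ n : ℕ, T.sameType (Arena.play T.preArena μ' χ q n)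
        (Arena.play T.preArena μ χε q n)) →
      ∀ n : ℕ,
        Arena.FinRun.time (Arena.play T.preArena μ' χ q n) - n * ε ≤
          Arena.FinRun.time (Arena.play T.preArena μ χε q n)) ∧
    (∀ χ : T.MaxPre, T.MaxClosed χ → ∀ ε : ℝ, 0 < ε →
      ∀ μ : T.MinPre, T.MinTP μ → ∀ με : T.MinPre, T.EpsCloseMin μ με ε →
      ∀ q : T.Omega, T.barS q → ∀ χ' : T.MaxPre, T.MaxTP χ' →
      (∀ n : ℕ, T.sameType (Arena.play T.preArena μ χ' q n)
        (Arena.play T.preArena με χ q n)) →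
      ∀ n : ℕ,
        Arena.FinRun.time (Arena.play T.preArena με χ q n) ≤
          Arena.FinRun.time (Arena.play T.preArena μ χ' q n) + n * ε) := by
  refine ⟨fun μ hμ ε hε χ hχ χε hχε q _ μ' hμ' hst n => ?_,
    fun χ hχ ε hε μ hμ με hμε q _ χ' hχ' hst n => ?_⟩
  · have := TimedGame.time_play_le_of_step_le hε.le hst
      (TimedGame.playMove_le_of_minClosed_of_epsCloseMax hε.le hμ' hχ hμ hχε hst) n
    linarith
  · have hst' := fun n => (hst n).symm
    exact TimedGame.time_play_le_of_step_le hε.le hst'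
      (TimedGame.playMove_le_of_epsCloseMin_of_maxClosed hε.le hμ hχ' hμε hχ hst') n
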